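/- The total length of an admissable sequence of integers is at most 4 times its range, where the range is the difference between the maximum and minimum integers visited by the sequence. -/

import Mathlib

/-!
Consecutive points `i j`, `i (j + 1)` of a height-monotone sequence are both multiples of
`2 ^ h (j + 1)` but differ in their `2`-adic valuation, so their distance is a nonzero multiple of
`2 ^ h (j + 1)` below `2 ^ h j`: it lies in `[2 ^ h (j + 1), 2 ^ h j - 2 ^ h (j + 1)]`. The upper
bounds telescope, so all steps after the first add up to less than `2 ^ h 1`, which is at most the
first step. Each half of an admissable sequence thus has length at most twice its first step, and
that step is at most the range.
-/

/-- `HasHeight x h` : the 2-adic valuation of `x` is exactly `h`. -/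
def HasHeight (x : ℤ) (h : ℕ) : Prop := ∃ k : ℤ, x = (2 * k + 1) * 2 ^ h

/-- A height-monotone sequence of integers `i 0, …, i (m-1)` with heights `h`. -/
def HeightMonotone (m : ℕ) (i : ℕ → ℤ) (h : ℕ → ℕ) : Prop :=
  (∀ j < m, HasHeight (i j) (h j)) ∧
  (∀ j, j + 1 < m → h (j + 1) < h j) ∧
  (∀ j, j + 1 < m → |i (j + 1) - i j| < 2 ^ (h j))

theorem Int.abs_le_sub_of_dvd_of_abs_lt {d n N : ℤ} (hn : d ∣ n) (hN : d ∣ N) (h : |n| < N) :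
    |n| ≤ N - d := by
  have : d ≤ N - |n| := Int.le_of_dvd (by linarith) (dvd_sub hN ((dvd_abs _ _).mpr hn))
  linarith

namespace HasHeight

variable {x y : ℤ} {a b : ℕ}

theorem two_pow_dvd (hx : HasHeight x a) : (2 : ℤ) ^ a ∣ x := by
  obtain ⟨k, rfl⟩ := hx
  exact dvd_mul_left _ _

theorem not_two_pow_succ_dvd (hx : HasHeight x a) : ¬(2 : ℤ) ^ (a + 1) ∣ x := by
  obtain ⟨k, rfl⟩ := hx
  rw [pow_succ', mul_dvd_mul_iff_right (by positivity)]
  omega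

theorem two_pow_dvd_sub (hx : HasHeight x a) (hy : HasHeight y b) (hba : b ≤ a) :
    (2 : ℤ) ^ b ∣ y - x :=
  dvd_sub hy.two_pow_dvd ((pow_dvd_pow 2 hba).trans hx.two_pow_dvd)

theorem two_pow_le_abs_sub (hx : HasHeight x a) (hy : HasHeight y b) (hba : b < a) :
    (2 : ℤ) ^ b ≤ |y - x| := by
  have hne : y - x ≠ 0 := by
    rw [sub_ne_zero]
    rintro rfl
    exact hy.not_two_pow_succ_dvd ((pow_dvd_pow 2 hba).trans hx.two_pow_dvd)
  exact Int.le_of_dvd (abs_pos.mpr hne) ((dvd_abs _ _).mpr (hx.two_pow_dvd_sub hy hba.le))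

theorem abs_sub_le_two_pow_sub_two_pow (hx : HasHeight x a) (hy : HasHeight y b) (hba : b ≤ a)
    (h : |y - x| < 2 ^ a) : |y - x| ≤ 2 ^ a - 2 ^ b :=
  Int.abs_le_sub_of_dvd_of_abs_lt (hx.two_pow_dvd_sub hy hba) (pow_dvd_pow 2 hba) h

end HasHeight

namespace HeightMonotone

variable {m : ℕ} {i : ℕ → ℤ} {h : ℕ → ℕ}

theorem two_pow_le_abs_step (H : HeightMonotone m i h) {j : ℕ} (hj : j + 1 < m) :
    (2 : ℤ) ^ h (j + 1) ≤ |i (j + 1) - i j| :=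
  (H.1 j (by omega)).two_pow_le_abs_sub (H.1 (j + 1) hj) (H.2.1 j hj)

theorem abs_step_le (H : HeightMonotone m i h) {j : ℕ} (hj : j + 1 < m) :
    |i (j + 1) - i j| ≤ 2 ^ h j - 2 ^ h (j + 1) :=
  (H.1 j (by omega)).abs_sub_le_two_pow_sub_two_pow (H.1 (j + 1) hj) (H.2.1 j hj).le (H.2.2 j hj)

theorem sum_abs_step_le_two_mul_abs_first_step (H : HeightMonotone m i h) :
    ∑ k ∈ Finset.range (m - 1), |i (k + 1) - i k| ≤ 2 * |i 1 - i 0| := by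
  obtain hm | hm := lt_or_ge m 2
  · rw [show m - 1 = 0 by omega, Finset.sum_range_zero]
    positivity
  obtain ⟨n, rfl⟩ : ∃ n, m = n + 2 := ⟨m - 2, by omega⟩
  have htail : ∑ k ∈ Finset.range n, |i (k + 2) - i (k + 1)| ≤ 2 ^ h 1 - 2 ^ h (n + 1) :=
    calc ∑ k ∈ Finset.range n, |i (k + 2) - i (k + 1)|
        ≤ ∑ k ∈ Finset.range n, ((2 : ℤ) ^ h (k + 1) - 2 ^ h (k + 2)) :=
          Finset.sum_le_sum fun k hk => H.abs_step_le (by have := Finset.mem_range.mp hk; omega)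
      _ = 2 ^ h 1 - 2 ^ h (n + 1) := Finset.sum_range_sub' (fun k => (2 : ℤ) ^ h (k + 1)) n
  have hfirst := H.two_pow_le_abs_step (j := 0) (by omega)
  rw [show n + 2 - 1 = n + 1 by omega, Finset.sum_range_succ']
  linarith [pow_pos (two_pos : (0 : ℤ) < 2) (h (n + 1))]

theorem sum_abs_step_le_two_mul_range (H : HeightMonotone m i h) (hm : 2 ≤ m) {l M : ℤ}
    (hb : ∀ k < m, l ≤ i k ∧ i k ≤ M) :
    ∑ k ∈ Finset.range (m - 1), |i (k + 1) - i k| ≤ 2 * (M - l) := by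
  obtain ⟨hl0, hM0⟩ := hb 0 (by omega)
  obtain ⟨hl1, hM1⟩ := hb 1 (by omega)
  linarith [H.sum_abs_step_le_two_mul_abs_first_step, abs_sub_le_of_le_of_le hl1 hM1 hl0 hM0]

end HeightMonotone

theorem admissable_length_le_four_mul_range_general
    (q m : ℕ) (hq : 2 ≤ q) (hm : 2 ≤ m)
    (jseq iseq : ℕ → ℤ) (hj hi : ℕ → ℕ)
    (hHMj : HeightMonotone q jseq hj) (hHMi : HeightMonotone m iseq hi)
    (M l : ℤ)
    (hMj : ∀ k < q, l ≤ jseq k ∧ jseq k ≤ M)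
    (hMi : ∀ k < m, l ≤ iseq k ∧ iseq k ≤ M) :
    (∑ k ∈ Finset.range (q - 1), |jseq (k + 1) - jseq k|) +
      (∑ k ∈ Finset.range (m - 1), |iseq (k + 1) - iseq k|) ≤ 4 * (M - l) := by
  linarith [hHMj.sum_abs_step_le_two_mul_range hq hMj, hHMi.sum_abs_step_le_two_mul_range hm hMi]

/-- An admissable sequence is the concatenation of a reversed height-monotone
sequence `jseq` (from `m* = jseq 0` to `m1`) with a height-monotone sequence
`iseq` (from `m* = iseq 0` to `m2`).  Its total length (which equals the sum of
the step lengths of the two constituent sequences) is at most `4` times its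
range `M - l`, for any bounds `l ≤ · ≤ M` on all the integers visited. -/
theorem admissable_length_le_four_mul_range
    (q m : ℕ) (hq : 2 ≤ q) (hm : 2 ≤ m)
    (jseq iseq : ℕ → ℤ) (hj hi : ℕ → ℕ)
    (hstart : jseq 0 = iseq 0)
    (hHMj : HeightMonotone q jseq hj) (hHMi : HeightMonotone m iseq hi)
    (M l : ℤ)
    (hMj : ∀ k < q, l ≤ jseq k ∧ jseq k ≤ M)
    (hMi : ∀ k < m, l ≤ iseq k ∧ iseq k ≤ M) :
    (∑ k ∈ Finset.range (q - 1), |jseq (k + 1) - jseq k|) +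
      (∑ k ∈ Finset.range (m - 1), |iseq (k + 1) - iseq k|) ≤ 4 * (M - l) :=
  admissable_length_le_four_mul_range_general q m hq hm jseq iseq hj hi hHMj hHMi M l hMj hMi
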